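/- arXiv:1207.5258 — 7 statements merged into one kernel-verified Lean document; each statement's English description precedes it below -/
import Mathlib

section
/- Let M ⊆ ℝⁿ be a C² manifold and let V be an open set containing M. For y ∈ M and ε > 0 set V_ε(y) := {z + v : z ∈ M, v ∈ N_zM, |y − z| < ε, |v| < ε}, and assume that for every y ∈ M there exists ε > 0 with V_ε(y) ⊆ V. Then for every real κ > 0 there exists a strictly positive κ-Lipschitz function δ : M → ℝ such that the set U_δ := {y + v : y ∈ M, v ∈ N_yM, |v| < δ(y)} is contained in V. -/
/-!
Choose for every `w ∈ M` a radius `ρ w > 0` as in `hloc`. The width `δ` is the upper envelope of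
the cones `y ↦ min (c ρ w) 1 - κ ‖y - w‖`, `c = min κ 1`, centred at the points `w ∈ M`. A supremum
of `κ`-Lipschitz functions is `κ`-Lipschitz, and the cone centred at `y` itself makes `δ y > 0`.
If `‖v‖ < δ y`, some cone lies above `‖v‖` at `y`; its height forces `‖v‖ < ρ w` and its slope
forces `‖w - y‖ < ρ w`, so `y + v ∈ V` by the choice of `ρ w`.
-/

open Filter Topology Metric

noncomputable section

/-- `M ⊆ ℝⁿ` is a `C^p` manifold of dimension `d`: around each of its points it is the zero
set of a `C^p` map into `ℝ^(n-d)` whose derivative is surjective. -/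
def IsCpManifold (n : ℕ) (p : ℕ∞) (d : ℕ) (M : Set (EuclideanSpace ℝ (Fin n))) : Prop :=
  ∀ x ∈ M, ∃ (U : Set (EuclideanSpace ℝ (Fin n)))
    (F : EuclideanSpace ℝ (Fin n) → EuclideanSpace ℝ (Fin (n - d))),
    IsOpen U ∧ x ∈ U ∧ ContDiffOn ℝ p F U ∧ M ∩ U = U ∩ F ⁻¹' {0} ∧
      Function.Surjective (fderiv ℝ F x)

/-- The tangent space of `M` at `x`: the linear span of the tangent cone. -/
def tangentSp (n : ℕ) (M : Set (EuclideanSpace ℝ (Fin n))) (x : EuclideanSpace ℝ (Fin n)) :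
    Submodule ℝ (EuclideanSpace ℝ (Fin n)) :=
  Submodule.span ℝ (tangentConeAt ℝ M x)

/-- The normal space of `M` at `x`: the orthogonal complement of the tangent space. -/
def normalSp (n : ℕ) (M : Set (EuclideanSpace ℝ (Fin n))) (x : EuclideanSpace ℝ (Fin n)) :
    Submodule ℝ (EuclideanSpace ℝ (Fin n)) :=
  (tangentSp n M x)ᗮ

open scoped NNReal

theorem LipschitzWith.ciSup {α ι : Type*} [PseudoMetricSpace α] {K : ℝ≥0} {f : ι → α → ℝ}
    (hf : ∀ i, LipschitzWith K (f i)) (hbdd : ∀ x, BddAbove (Set.range fun i ↦ f i x)) :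
    LipschitzWith K fun x ↦ ⨆ i, f i x := by
  cases isEmpty_or_nonempty ι
  · simpa only [Real.iSup_of_isEmpty] using LipschitzWith.const' (0 : ℝ)
  · refine LipschitzWith.of_le_add_mul K fun x y ↦ ciSup_le fun i ↦ ?_
    exact ((hf i).le_add_mul x y).trans (by gcongr; exact le_ciSup (hbdd y) i)

section TubeWidth

variable {X : Type*} [PseudoMetricSpace X] (M : Set X) (ρ : X → ℝ) (K : ℝ≥0)

/-- The cone heights are capped by `1` so that the supremum is finite, and scaled by `min K 1`
so that a cone of height above `t ≥ 0` at `y` has its centre `w` within `ρ w` of `y` and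
`t < ρ w`. -/
def tubeWidth (y : X) : ℝ :=
  ⨆ w : M, min (min (K : ℝ) 1 * ρ w) 1 - K * dist y w

theorem bddAbove_tubeWidth_cones (y : X) :
    BddAbove (Set.range fun w : M ↦ min (min (K : ℝ) 1 * ρ w) 1 - K * dist y w) := by
  refine ⟨1, ?_⟩
  rintro _ ⟨w, rfl⟩
  have := min_le_right (min (K : ℝ) 1 * ρ w) 1
  have : 0 ≤ (K : ℝ) * dist y w := by positivity
  linarith

theorem lipschitzWith_tubeWidth : LipschitzWith K (tubeWidth M ρ K) := by
  refine LipschitzWith.ciSup (fun w ↦ LipschitzWith.of_le_add_mul K fun x y ↦ ?_)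
    (bddAbove_tubeWidth_cones M ρ K)
  have := mul_le_mul_of_nonneg_left (dist_triangle y x w) K.coe_nonneg
  rw [dist_comm y x, mul_add] at this
  linarith

variable {M ρ K}

theorem tubeWidth_pos (hK : 0 < K) (hρ : ∀ w ∈ M, 0 < ρ w) {y : X} (hy : y ∈ M) :
    0 < tubeWidth M ρ K y := by
  have hcone := le_ciSup (bddAbove_tubeWidth_cones M ρ K y) ⟨y, hy⟩
  have : 0 < min (min (K : ℝ) 1 * ρ y) 1 :=
    lt_min (mul_pos (lt_min hK one_pos) (hρ y hy)) one_pos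
  simp only [dist_self, mul_zero, sub_zero] at hcone
  exact this.trans_le hcone

theorem exists_dist_lt_of_lt_tubeWidth (hK : 0 < K) {y : X} {t : ℝ} (ht₀ : 0 ≤ t)
    (ht : t < tubeWidth M ρ K y) : ∃ w ∈ M, dist w y < ρ w ∧ t < ρ w := by
  have : Nonempty M := by
    by_contra hM
    rw [not_nonempty_iff] at hM
    rw [tubeWidth, Real.iSup_of_isEmpty] at ht
    linarith
  obtain ⟨⟨w, hw⟩, hcone⟩ := exists_lt_of_lt_ciSup ht
  have hcap : t + K * dist y w < min (K : ℝ) 1 * ρ w := by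
    linarith [min_le_left (min (K : ℝ) 1 * ρ w) 1]
  have hρ : 0 < ρ w :=
    pos_of_mul_pos_right ((add_nonneg ht₀ (by positivity)).trans_lt hcap) (by positivity)
  have hKρ : (K : ℝ) * dist w y < K * ρ w := by
    rw [dist_comm]
    linarith [mul_le_mul_of_nonneg_right (min_le_left (K : ℝ) 1) hρ.le]
  refine ⟨w, hw, lt_of_mul_lt_mul_left hKρ K.coe_nonneg, ?_⟩
  have : 0 ≤ (K : ℝ) * dist y w := by positivity
  linarith [mul_le_of_le_one_left hρ.le (min_le_right (K : ℝ) 1)]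

end TubeWidth

theorem exists_tubular_neighborhood_general
    (n : ℕ) (M V : Set (EuclideanSpace ℝ (Fin n)))
    (hloc : ∀ y ∈ M, ∃ ε > (0 : ℝ), ∀ z ∈ M, ∀ v ∈ normalSp n M z,
      ‖y - z‖ < ε → ‖v‖ < ε → z + v ∈ V)
    (κ : ℝ) (hκ : 0 < κ) :
    ∃ δ : EuclideanSpace ℝ (Fin n) → ℝ,
      (∀ y ∈ M, 0 < δ y) ∧
      (∀ x ∈ M, ∀ y ∈ M, |δ x - δ y| ≤ κ * ‖x - y‖) ∧
      (∀ y ∈ M, ∀ v ∈ normalSp n M y, ‖v‖ < δ y → y + v ∈ V) := by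
  choose! ρ hρ₀ hρ using hloc
  lift κ to ℝ≥0 using hκ.le
  have hκ : 0 < κ := NNReal.coe_pos.1 hκ
  refine ⟨tubeWidth M ρ κ, fun y hy ↦ tubeWidth_pos hκ hρ₀ hy, fun x _ y _ ↦ ?_,
    fun y hy v hv hvδ ↦ ?_⟩
  · rw [← Real.dist_eq, ← dist_eq_norm]
    exact (lipschitzWith_tubeWidth M ρ κ).dist_le_mul x y
  · obtain ⟨w, hw, hwy, hvw⟩ := exists_dist_lt_of_lt_tubeWidth hκ (norm_nonneg v) hvδ
    exact hρ w hw y hy v hv (by rwa [← dist_eq_norm]) hvw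

/-- **Existence of a tubular neighborhood of prescribed Lipschitz width.** -/
theorem exists_tubular_neighborhood
    (n : ℕ) (M V : Set (EuclideanSpace ℝ (Fin n)))
    (hM : ∃ d : ℕ, IsCpManifold n 2 d M)
    (hV : IsOpen V) (hMV : M ⊆ V)
    (hloc : ∀ y ∈ M, ∃ ε > (0 : ℝ), ∀ z ∈ M, ∀ v ∈ normalSp n M z,
      ‖y - z‖ < ε → ‖v‖ < ε → z + v ∈ V)
    (κ : ℝ) (hκ : 0 < κ) :
    ∃ δ : EuclideanSpace ℝ (Fin n) → ℝ,
      (∀ y ∈ M, 0 < δ y) ∧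
      (∀ x ∈ M, ∀ y ∈ M, |δ x - δ y| ≤ κ * ‖x - y‖) ∧
      (∀ y ∈ M, ∀ v ∈ normalSp n M y, ‖v‖ < δ y → y + v ∈ V) :=
  exists_tubular_neighborhood_general n M V hloc κ hκ

end
end

section
/- Let L and M be C² manifolds in ℝⁿ with L ⊆ (cl M) \ M, and let V be a neighborhood of L and U a neighborhood of M such that for every w ∈ V ∩ U the set equality P_L(w) = ⋃_{z ∈ P_M(w)} P_L(z) holds. Let x ∈ M ∩ V and v ∈ N_xM, and suppose t > 0 is such that x + t·v ∈ V ∩ U and P_M(x + t·v) = {x}. Then v ∈ N_yL for every y ∈ P_L(x). -/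
open Filter Topology Metric

noncomputable section

/-- The metric projection of `x` onto a set `S`: the set of nearest points of `S` to `x`. -/
def metricProj {n : ℕ} (S : Set (EuclideanSpace ℝ (Fin n))) (x : EuclideanSpace ℝ (Fin n)) :
    Set (EuclideanSpace ℝ (Fin n)) :=
  {y ∈ S | dist x y = Metric.infDist x S}

/-!
Let `y` be a nearest point of `L` to `x`. Since `x` is the only nearest point of `M` to
`x + t • v`, normal flatness at `x + t • v` makes `y` a nearest point of `L` to `x + t • v` as
well. At a nearest point `y` of a `C¹` manifold to `z`, the Lagrange multiplier rule for
`‖· - z‖²` on the level set of a submersion defining the manifold near `y` puts `z - y` in the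
normal space at `y`. Hence both `x - y` and `x + t • v - y` are normal to `L` at `y`, and so is
their difference `t • v`.
-/

theorem IsLocalExtrOn.apply_eq_zero_of_hasStrictFDerivAt
    {E F : Type*} [NormedAddCommGroup E] [NormedSpace ℝ E] [CompleteSpace E]
    [NormedAddCommGroup F] [NormedSpace ℝ F] [CompleteSpace F]
    {f : E → F} {φ : E → ℝ} {x₀ : E} {f' : E →L[ℝ] F} {φ' : StrongDual ℝ E}
    (hextr : IsLocalExtrOn φ {x | f x = f x₀} x₀) (hf' : HasStrictFDerivAt f f' x₀)
    (hφ' : HasStrictFDerivAt φ φ' x₀) (hsurj : Function.Surjective f') :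
    ∀ u, f' u = 0 → φ' u = 0 := by
  obtain ⟨Λ, Λ₀, hne, hΛ⟩ := hextr.exists_linear_map_of_hasStrictFDerivAt hf' hφ'
  -- `Λ ∘ f' = 0` forces `Λ = 0` because `f'` is onto.
  have hΛ₀ : Λ₀ ≠ 0 := by
    rintro rfl
    refine hne (Prod.ext (LinearMap.ext fun w => ?_) rfl)
    obtain ⟨u, rfl⟩ := hsurj w
    simpa using hΛ u
  intro u hu
  have := hΛ u
  rw [hu, map_zero, zero_add, smul_eq_mul] at this
  exact (mul_eq_zero.1 this).resolve_left hΛ₀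

theorem tangentConeAt_subset_ker {𝕜 E F : Type*} [NontriviallyNormedField 𝕜]
    [NormedAddCommGroup E] [NormedSpace 𝕜 E] [NormedAddCommGroup F] [NormedSpace 𝕜 F]
    {f : E → F} {f' : E →L[𝕜] F} {s : Set E} {y : E}
    (hf : HasFDerivAt f f' y) (hs : ∀ z ∈ s, f z = f y) :
    tangentConeAt 𝕜 s y ⊆ LinearMap.ker (f' : E →ₗ[𝕜] F) :=
  fun _ hu => hf.hasFDerivWithinAt.unique_on
    ((hasFDerivWithinAt_const (f y) y s).congr hs rfl) hu

theorem isMinOn_norm_sub_sq_of_mem_metricProj {n : ℕ} {S : Set (EuclideanSpace ℝ (Fin n))}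
    {z y : EuclideanSpace ℝ (Fin n)} (hy : y ∈ metricProj S z) :
    IsMinOn (fun w => ‖w - z‖ ^ 2) S y := fun w hw => by
  simp only [Set.mem_ofPred_eq, ← dist_eq_norm, dist_comm _ z, hy.2]
  exact pow_le_pow_left₀ infDist_nonneg (infDist_le_dist_of_mem hw) 2

theorem sub_mem_normalSp_of_mem_metricProj {n d : ℕ} {p : ℕ∞}
    {L : Set (EuclideanSpace ℝ (Fin n))} (hL : IsCpManifold n p d L) (hp : p ≠ 0)
    {z y : EuclideanSpace ℝ (Fin n)} (hy : y ∈ metricProj L z) : z - y ∈ normalSp n L y := by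
  obtain ⟨U, F, hUo, hyU, hF, hLU, hsurj⟩ := hL y hy.1
  have hzero : ∀ w ∈ L ∩ U, F w = 0 := fun w hw => (hLU ▸ hw).2
  have hF' : HasStrictFDerivAt F (fderiv ℝ F y) y :=
    (hF.contDiffAt (hUo.mem_nhds hyU)).hasStrictFDerivAt (by exact_mod_cast hp)
  have hmin : IsLocalExtrOn (fun w => ‖w - z‖ ^ 2) {w | F w = F y} y := by
    refine .inl ?_
    filter_upwards [self_mem_nhdsWithin, mem_nhdsWithin_of_mem_nhds (hUo.mem_nhds hyU)]
      with w hwF hwU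
    refine isMinOn_norm_sub_sq_of_mem_metricProj hy
      (hLU.symm.subset.trans Set.inter_subset_left ⟨hwU, ?_⟩)
    simpa [hzero y ⟨hy.1, hyU⟩] using hwF
  have hker := hmin.apply_eq_zero_of_hasStrictFDerivAt hF'
    ((hasStrictFDerivAt_norm_sq _).comp y ((hasStrictFDerivAt_id y).sub_const z)) hsurj
  have htangent : tangentSp n L y ≤ LinearMap.ker
      (fderiv ℝ F y : EuclideanSpace ℝ (Fin n) →ₗ[ℝ] EuclideanSpace ℝ (Fin (n - d))) := by
    refine Submodule.span_le.2 ?_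
    rw [← tangentConeAt_inter_nhds (hUo.mem_nhds hyU)]
    exact tangentConeAt_subset_ker hF'.hasFDerivAt
      (fun w hw => (hzero w hw).trans (hzero y ⟨hy.1, hyU⟩).symm)
  refine (Submodule.mem_orthogonal' _ _).2 fun u hu => ?_
  have := hker u (htangent hu)
  simp only [map_sub, ContinuousLinearMap.comp_id, smul_apply, sub_apply, coe_innerSL_apply,
    nsmul_eq_mul, Nat.cast_ofNat, mul_eq_zero, OfNat.ofNat_ne_zero, false_or] at this
  rw [inner_sub_left]
  linarith

theorem normal_vector_of_normally_flat_general
    (n : ℕ) (L M : Set (EuclideanSpace ℝ (Fin n)))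
    (hL : ∃ d : ℕ, IsCpManifold n 2 d L)
    (V U : Set (EuclideanSpace ℝ (Fin n)))
    (hflat : ∀ w ∈ V ∩ U, metricProj L w = ⋃ z ∈ metricProj M w, metricProj L z)
    (x : EuclideanSpace ℝ (Fin n))
    (v : EuclideanSpace ℝ (Fin n))
    (t : ℝ) (ht : 0 < t) (htv : x + t • v ∈ V ∩ U)
    (hproj : metricProj M (x + t • v) = {x}) :
    ∀ y ∈ metricProj L x, v ∈ normalSp n L y := by
  intro y hy
  obtain ⟨d, hLd⟩ := hL
  have hy' : y ∈ metricProj L (x + t • v) := by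
    rw [hflat _ htv, hproj]
    simpa using hy
  have htv_normal : t • v ∈ normalSp n L y := by
    have := sub_mem (sub_mem_normalSp_of_mem_metricProj hLd two_ne_zero hy')
      (sub_mem_normalSp_of_mem_metricProj hLd two_ne_zero hy)
    rwa [sub_sub_sub_cancel_right, add_sub_cancel_left] at this
  exact (Submodule.smul_mem_iff _ ht.ne').1 htv_normal

/-- **Normal flatness propagates normal vectors.** -/
theorem normal_vector_of_normally_flat
    (n : ℕ) (L M : Set (EuclideanSpace ℝ (Fin n)))
    (hL : ∃ d : ℕ, IsCpManifold n 2 d L) (hM : ∃ d : ℕ, IsCpManifold n 2 d M)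
    (hLM : L ⊆ closure M \ M)
    (V U : Set (EuclideanSpace ℝ (Fin n)))
    (hV : IsOpen V) (hU : IsOpen U) (hLV : L ⊆ V) (hMU : M ⊆ U)
    (hflat : ∀ w ∈ V ∩ U, metricProj L w = ⋃ z ∈ metricProj M w, metricProj L z)
    (x : EuclideanSpace ℝ (Fin n)) (hx : x ∈ M ∩ V)
    (v : EuclideanSpace ℝ (Fin n)) (hv : v ∈ normalSp n M x)
    (t : ℝ) (ht : 0 < t) (htv : x + t • v ∈ V ∩ U)
    (hproj : metricProj M (x + t • v) = {x}) :
    ∀ y ∈ metricProj L x, v ∈ normalSp n L y :=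
  normal_vector_of_normally_flat_general n L M hL V U hflat x v t ht htv hproj

end
end

section
/- Let L and M be relatively open polyhedra in ℝⁿ, i.e., each is the relative interior of a nonempty set of the form {x ∈ ℝⁿ : ⟨aᵢ, x⟩ ≤ bᵢ for i = 1,…,k}, and suppose L ⊆ (cl M) \ M. Then there exist open neighborhoods V of L and U of M such that for every x ∈ V ∩ U: the nearest point of M to x is unique, call it z; the nearest point of L to x is unique; the nearest point of L to z is unique; and these satisfy P_L(x) = P_L(z), i.e., the nearest point of L to x coincides with the nearest point of L to the nearest point of M to x. -/
/-!
Let `Q` be the closed polyhedron with relative interior `M`. For `x` near `M`, the nearest point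
`z` of `Q` to `x` stays away from the closed set `Q \ M`, so `z ∈ M`; the variational inequality
`⟪x - z, y - z⟫ ≤ 0` on `Q` makes `z` the unique nearest point of `M`. For `x` near a point `p` of
`L`, the orthogonal projection `w` of `x` onto the affine span `A` of `L` lies in `L`, hence is the
unique nearest point of `L`. Then `z` is near `p` too, so every constraint of `Q` active at `z` is
active at `p`, and is therefore constant along `A`: it is maximal on `L ⊆ Q` at the relatively
interior point `p`. So `Q` contains `z ± t • v` for each direction `v` of `A` and small `t`, the
variational inequality gives `x - z ⟂ A`, hence `z - w ⟂ A`, and `w` is the nearest point of `L`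
to `z` as well.
-/

open RealInnerProductSpace

noncomputable section

/-- A relatively open polyhedron: the relative interior of a nonempty finite intersection of
closed half-spaces. -/
def IsRelOpenPolyhedron (n : ℕ) (L : Set (EuclideanSpace ℝ (Fin n))) : Prop :=
  ∃ (k : ℕ) (a : Fin k → EuclideanSpace ℝ (Fin n)) (b : Fin k → ℝ),
    ({x : EuclideanSpace ℝ (Fin n) | ∀ i, ⟪a i, x⟫ ≤ b i}).Nonempty ∧
    L = intrinsicInterior ℝ {x : EuclideanSpace ℝ (Fin n) | ∀ i, ⟪a i, x⟫ ≤ b i}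

open Filter Topology Metric

theorem exists_isOpen_superset_forall_of_eventually {X : Type*} [PseudoMetricSpace X] {S : Set X}
    {P : X → X → Prop} (h : ∀ p ∈ S, ∀ᶠ y in 𝓝 p, P p y) :
    ∃ V, IsOpen V ∧ S ⊆ V ∧ ∀ x ∈ V, ∃ p ∈ S, ∀ y, dist y p ≤ 2 * dist x p → P p y := by
  choose! ε hε hP using fun p hp => Metric.eventually_nhds_iff.1 (h p hp)
  refine ⟨⋃ p ∈ S, ball p (ε p / 2), isOpen_biUnion fun _ _ => isOpen_ball,
    fun p hp => Set.mem_biUnion hp (mem_ball_self (half_pos (hε p hp))), fun x hx => ?_⟩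
  obtain ⟨p, hp, hxp⟩ := Set.mem_iUnion₂.1 hx
  exact ⟨p, hp, fun y hy => hP p hp (by rw [mem_ball] at hxp; linarith)⟩

theorem exists_isOpen_nearest_mem {X : Type*} [PseudoMetricSpace X] {K M : Set X} (hMK : M ⊆ K)
    (hB : IsClosed (K \ M)) :
    ∃ U, IsOpen U ∧ M ⊆ U ∧ ∀ x ∈ U, ∀ z ∈ K, (∀ y ∈ K, dist x z ≤ dist x y) → z ∈ M := by
  obtain ⟨U, hU, hMU, hnear⟩ := exists_isOpen_superset_forall_of_eventually
    (P := fun _ y => y ∉ K \ M) fun m hm => hB.isOpen_compl.mem_nhds fun h => h.2 hm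
  refine ⟨U, hU, hMU, fun x hx z hz hmin => ?_⟩
  obtain ⟨m, hm, hfar⟩ := hnear x hx
  have hzm : dist z m ≤ 2 * dist x m := by
    linarith [dist_triangle_left z m x, hmin m (hMK hm)]
  by_contra hzM
  exact hfar z hzm ⟨hz, hzM⟩

section InnerProductSpace

variable {E : Type*} [NormedAddCommGroup E] [InnerProductSpace ℝ E]

theorem dist_sq_add_dist_sq_le_of_inner_nonpos {x y z : E} (h : ⟪x - z, y - z⟫ ≤ 0) :
    dist x z ^ 2 + dist z y ^ 2 ≤ dist x y ^ 2 := by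
  have hxy : x - y = (x - z) - (y - z) := by abel
  rw [dist_eq_norm, dist_eq_norm, dist_eq_norm, norm_sub_rev z y, hxy,
    norm_sub_sq_real (x - z) (y - z)]
  linarith

theorem dist_le_of_inner_nonpos {x y z : E} (h : ⟪x - z, y - z⟫ ≤ 0) : dist x z ≤ dist x y := by
  have := dist_sq_add_dist_sq_le_of_inner_nonpos h
  exact le_of_sq_le_sq (by nlinarith [sq_nonneg (dist z y)]) dist_nonneg

theorem exists_forall_inner_sub_nonpos {K : Set E} (hne : K.Nonempty) (hc : IsComplete K)
    (hK : Convex ℝ K) (x : E) : ∃ z ∈ K, ∀ y ∈ K, ⟪x - z, y - z⟫ ≤ 0 := by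
  obtain ⟨z, hz, hmin⟩ := exists_norm_eq_iInf_of_complete_convex hne hc hK x
  exact ⟨z, hz, (norm_eq_iInf_iff_real_inner_le_zero hK hz).1 hmin⟩

theorem inner_eq_zero_of_eventually_add_smul_mem {K : Set E} {u v z : E}
    (h : ∀ y ∈ K, ⟪u, y - z⟫ ≤ 0) (hv : ∀ᶠ t in 𝓝 (0 : ℝ), z + t • v ∈ K) : ⟪u, v⟫ = 0 := by
  obtain ⟨ε, hε, hball⟩ := Metric.eventually_nhds_iff.1 hv
  have key : ∀ t : ℝ, |t| < ε → t * ⟪u, v⟫ ≤ 0 := fun t ht => by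
    simpa [real_inner_smul_right] using h _ (hball (by simpa using ht))
  have hpos := key (ε / 2) (by rw [abs_of_pos (half_pos hε)]; linarith)
  have hneg := key (-(ε / 2)) (by rw [abs_neg, abs_of_pos (half_pos hε)]; linarith)
  nlinarith

open EuclideanGeometry in
theorem exists_mem_dist_le_sub_mem_orthogonal {A : AffineSubspace ℝ E}
    [A.direction.HasOrthogonalProjection] {p : E} (hp : p ∈ A) (x : E) :
    ∃ w ∈ A, dist w p ≤ dist x p ∧ x - w ∈ A.directionᗮ := by
  have : Nonempty A := ⟨⟨p, hp⟩⟩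
  refine ⟨orthogonalProjection A x, orthogonalProjection_mem x, ?_,
    vsub_orthogonalProjection_mem_direction_orthogonal A x⟩
  have := dist_sq_eq_dist_orthogonalProjection_sq_add_dist_orthogonalProjection_sq x hp
  rw [dist_comm p x, dist_comm p] at this
  nlinarith [dist_nonneg (x := x) (y := p),
    dist_nonneg (x := (orthogonalProjection A x : E)) (y := p)]

theorem eventually_mem_intrinsicInterior {Q : Set E} {p : E} (hp : p ∈ intrinsicInterior ℝ Q) :
    ∀ᶠ y in 𝓝 p, y ∈ affineSpan ℝ Q → y ∈ intrinsicInterior ℝ Q := by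
  obtain ⟨q, hq, rfl⟩ := hp
  obtain ⟨s, hs, hsub⟩ := (mem_nhds_subtype _ _ _).1 (isOpen_interior.mem_nhds hq)
  filter_upwards [hs] with y hy hyA
  exact ⟨⟨y, hyA⟩, hsub hy, rfl⟩

theorem IsClosed.sdiff_intrinsicInterior [FiniteDimensional ℝ E] {Q : Set E} (hQ : IsClosed Q) :
    IsClosed (Q \ intrinsicInterior ℝ Q) := by
  have h := closure_sdiff_intrinsicInterior (𝕜 := ℝ) Q
  rw [hQ.closure_eq] at h
  exact h ▸ isClosed_intrinsicFrontier (affineSpan ℝ Q).closed_of_finiteDimensional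

variable {ι : Type*}

def polyhedron (a : ι → E) (b : ι → ℝ) : Set E := {x | ∀ i, ⟪a i, x⟫ ≤ b i}

variable (a : ι → E) (b : ι → ℝ)

theorem isClosed_polyhedron : IsClosed (polyhedron a b) := by
  simp only [polyhedron, Set.ofPred_forall]
  exact isClosed_iInter fun i => isClosed_le (by fun_prop) continuous_const

theorem convex_polyhedron : Convex ℝ (polyhedron a b) := by
  simp only [polyhedron, Set.ofPred_forall]
  exact convex_iInter fun i => convex_halfSpace_le (innerₛₗ ℝ (a i)).isLinear (b i)

variable [Finite ι]

theorem eventually_forall_inner_lt (p : E) :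
    ∀ᶠ y in 𝓝 p, ∀ i, ⟪a i, p⟫ < b i → ⟪a i, y⟫ < b i := by
  refine eventually_all.2 fun i => ?_
  by_cases hi : ⟪a i, p⟫ < b i
  · filter_upwards [(continuous_const.inner continuous_id).continuousAt.eventually_lt
      continuousAt_const hi] with y hy using fun _ => hy
  · exact Eventually.of_forall fun _ h => absurd h hi

theorem eventually_add_smul_mem_polyhedron {z v : E} (hz : z ∈ polyhedron a b)
    (hv : ∀ i, ⟪a i, z⟫ = b i → ⟪a i, v⟫ = 0) :
    ∀ᶠ t in 𝓝 (0 : ℝ), z + t • v ∈ polyhedron a b := by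
  refine eventually_all.2 fun i => ?_
  rcases (hz i).lt_or_eq with hlt | heq
  · have hcont : Continuous fun t : ℝ => ⟪a i, z + t • v⟫ := by fun_prop
    exact (hcont.continuousAt.eventually_lt continuousAt_const (by simpa using hlt)).mono
      fun _ ht => ht.le
  · refine Eventually.of_forall fun t => ?_
    simp [inner_add_right, real_inner_smul_right, heq, hv i heq]

theorem eventually_forall_direction_add_smul_mem_polyhedron {Q : Set E} {p : E}
    (hp : p ∈ intrinsicInterior ℝ Q) (hQ : intrinsicInterior ℝ Q ⊆ polyhedron a b) :
    ∀ᶠ z in 𝓝 p, z ∈ polyhedron a b → ∀ v ∈ (affineSpan ℝ Q).direction,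
      ∀ᶠ t in 𝓝 (0 : ℝ), z + t • v ∈ polyhedron a b := by
  have hactive : ∀ i, ⟪a i, p⟫ = b i → ∀ v ∈ (affineSpan ℝ Q).direction, ⟪a i, v⟫ = 0 := by
    intro i hi v hv
    refine inner_eq_zero_of_eventually_add_smul_mem (K := intrinsicInterior ℝ Q) (z := p)
      (fun y hy => by rw [inner_sub_right, hi]; linarith [hQ hy i]) ?_
    have hline : Tendsto (fun t : ℝ => p + t • v) (𝓝 0) (𝓝 p) :=
      (by fun_prop : Continuous fun t : ℝ => p + t • v).tendsto' 0 p (by simp)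
    filter_upwards [hline.eventually (eventually_mem_intrinsicInterior hp)] with t ht
    refine ht ?_
    rw [add_comm]
    exact AffineSubspace.vadd_mem_of_mem_direction ((affineSpan ℝ Q).direction.smul_mem t hv)
      (subset_affineSpan ℝ Q (intrinsicInterior_subset hp))
  filter_upwards [eventually_forall_inner_lt a b p] with z hz hzQ v hv
  refine eventually_add_smul_mem_polyhedron a b hzQ fun i hi => hactive i ?_ v hv
  by_contra hne
  exact (hz i ((hQ hp i).lt_of_ne hne)).ne hi

theorem exists_isOpen_superset_intrinsicInterior_of_subset_polyhedron [FiniteDimensional ℝ E]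
    {Q : Set E} (hQ : intrinsicInterior ℝ Q ⊆ polyhedron a b) :
    ∃ V, IsOpen V ∧ intrinsicInterior ℝ Q ⊆ V ∧ ∀ x ∈ V,
      (∃ w ∈ intrinsicInterior ℝ Q, x - w ∈ (affineSpan ℝ Q).directionᗮ) ∧
      ∀ z ∈ polyhedron a b, (∀ y ∈ polyhedron a b, ⟪x - z, y - z⟫ ≤ 0) →
        x - z ∈ (affineSpan ℝ Q).directionᗮ := by
  obtain ⟨V, hV, hQV, hnear⟩ := exists_isOpen_superset_forall_of_eventually fun p hp =>
    (eventually_mem_intrinsicInterior hp).and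
      (eventually_forall_direction_add_smul_mem_polyhedron a b hp hQ)
  refine ⟨V, hV, hQV, fun x hx => ?_⟩
  obtain ⟨p, hp, hnear⟩ := hnear x hx
  have hpA := subset_affineSpan ℝ Q (intrinsicInterior_subset hp)
  obtain ⟨w, hwA, hwp, hw⟩ := exists_mem_dist_le_sub_mem_orthogonal hpA x
  refine ⟨⟨w, (hnear w (by linarith [dist_nonneg (x := x) (y := p)])).1 hwA, hw⟩,
    fun z hz hmin => (Submodule.mem_orthogonal' _ _).2 fun v hv => ?_⟩
  have hzp : dist z p ≤ 2 * dist x p := by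
    linarith [dist_triangle_left z p x, dist_le_of_inner_nonpos (hmin p (hQ hp))]
  exact inner_eq_zero_of_eventually_add_smul_mem hmin ((hnear z hzp).2 hz v hv)

end InnerProductSpace

theorem metricProj_eq_singleton_of_inner_nonpos {n : ℕ} {S : Set (EuclideanSpace ℝ (Fin n))}
    {x z : EuclideanSpace ℝ (Fin n)} (hz : z ∈ S) (h : ∀ y ∈ S, ⟪x - z, y - z⟫ ≤ 0) :
    metricProj S x = {z} := by
  have hinf : infDist x S = dist x z :=
    le_antisymm (infDist_le_dist_of_mem hz)
      ((le_infDist ⟨z, hz⟩).2 fun y hy => dist_le_of_inner_nonpos (h y hy))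
  ext y
  refine ⟨fun ⟨hy, hyd⟩ => ?_, ?_⟩
  · have := dist_sq_add_dist_sq_le_of_inner_nonpos (h y hy)
    rw [hyd, hinf] at this
    exact (dist_eq_zero.1 (pow_eq_zero_iff two_ne_zero |>.1
      (le_antisymm (by linarith) (sq_nonneg _)))).symm
  · rintro rfl
    exact ⟨hz, hinf.symm⟩

theorem metricProj_eq_singleton_of_sub_mem_orthogonal {n : ℕ}
    {S : Set (EuclideanSpace ℝ (Fin n))} {A : AffineSubspace ℝ (EuclideanSpace ℝ (Fin n))}
    (hSA : S ⊆ A) {x w : EuclideanSpace ℝ (Fin n)} (hw : w ∈ S) (h : x - w ∈ A.directionᗮ) :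
    metricProj S x = {w} :=
  metricProj_eq_singleton_of_inner_nonpos hw fun _ hy =>
    (Submodule.inner_left_of_mem_orthogonal (AffineSubspace.vsub_mem_direction (hSA hy) (hSA hw))
      h).le

/-- **Polyhedral strata are normally flat.** -/
theorem polyhedral_normally_flat
    (n : ℕ) (L M : Set (EuclideanSpace ℝ (Fin n)))
    (hL : IsRelOpenPolyhedron n L) (hM : IsRelOpenPolyhedron n M)
    (hLM : L ⊆ closure M \ M) :
    ∃ V U : Set (EuclideanSpace ℝ (Fin n)), IsOpen V ∧ IsOpen U ∧ L ⊆ V ∧ M ⊆ U ∧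
      ∀ x ∈ V ∩ U, ∃ z w : EuclideanSpace ℝ (Fin n),
        metricProj M x = {z} ∧ metricProj L x = {w} ∧ metricProj L z = {w} := by
  obtain ⟨_, aL, bL, -, rfl⟩ := hL
  obtain ⟨_, aM, bM, hQM, rfl⟩ := hM
  have hQMc := isClosed_polyhedron aM bM
  obtain ⟨V, hV, hLV, hVorth⟩ := exists_isOpen_superset_intrinsicInterior_of_subset_polyhedron
    aM bM fun _ hp => closure_minimal intrinsicInterior_subset hQMc (hLM hp).1
  obtain ⟨U, hU, hMU, hUnear⟩ :=
    exists_isOpen_nearest_mem intrinsicInterior_subset hQMc.sdiff_intrinsicInterior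
  refine ⟨V, U, hV, hU, hLV, hMU, fun x ⟨hxV, hxU⟩ => ?_⟩
  obtain ⟨⟨w, hwL, hxw⟩, horth⟩ := hVorth x hxV
  obtain ⟨z, hzQ, hz⟩ :=
    exists_forall_inner_sub_nonpos hQM hQMc.isComplete (convex_polyhedron aM bM) x
  have hzM := hUnear x hxU z hzQ fun y hy => dist_le_of_inner_nonpos (hz y hy)
  have hLA : intrinsicInterior ℝ (polyhedron aL bL) ⊆ affineSpan ℝ (polyhedron aL bL) :=
    intrinsicInterior_subset.trans (subset_affineSpan ℝ _)
  have hzw : z - w = (x - w) - (x - z) := (sub_sub_sub_cancel_left w z x).symm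
  exact ⟨z, w, metricProj_eq_singleton_of_inner_nonpos hzM fun y hy =>
    hz y (intrinsicInterior_subset hy), metricProj_eq_singleton_of_sub_mem_orthogonal hLA hwL hxw,
    metricProj_eq_singleton_of_sub_mem_orthogonal hLA hwL (hzw ▸ sub_mem hxw (horth z hzQ hz))⟩

end
end

section
/- Let Q ⊆ ℝⁿ be permutation-invariant, and let Λ := {V·(diag q)·Vᵀ : V an n×n orthogonal matrix, q ∈ Q} be the associated spectral set of real symmetric n×n matrices. Let X = U·(diag x)·Uᵀ where U is orthogonal and x ∈ ℝⁿ satisfies x₁ ≥ x₂ ≥ … ≥ xₙ. If z ∈ Q satisfies |x − z| = d(x, Q), then the matrix Y := U·(diag z)·Uᵀ lies in Λ and satisfies ‖X − Y‖ = d(X, Λ), where ‖·‖ is the Frobenius norm and d(X, Λ) := inf_{Z∈Λ}‖X − Z‖. -/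
/-!
For a competitor `V * diagonal q * Vᵀ ∈ Λ` put `W = Uᵀ * V`. Expanding the Frobenius norm gives
`‖X - V diag q Vᵀ‖² = |x|² + |q|² - 2 xᵀ D q` with `D = W ⊙ W`, which is doubly stochastic because
`W` is orthogonal. By Birkhoff's theorem the linear function `D ↦ xᵀ D q` is maximised at a
permutation matrix, so the right side is at least `|x - q ∘ σ|²` for some `σ`. As `q ∘ σ ∈ Q`,
this is at least `|x - z|² = ‖X - U diag z Uᵀ‖²`.
-/

open Matrix

noncomputable section

/-- The Euclidean norm on `ℝⁿ` (vectors as functions). -/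
def vnorm {n : ℕ} (x : Fin n → ℝ) : ℝ := Real.sqrt (∑ i, x i ^ 2)

/-- Euclidean distance from a point to a set in `ℝⁿ`. -/
def vdistSet {n : ℕ} (x : Fin n → ℝ) (Q : Set (Fin n → ℝ)) : ℝ :=
  sInf ((fun y => vnorm (x - y)) '' Q)

/-- The Frobenius norm of a real matrix. -/
def frobNorm {n m : ℕ} (A : Matrix (Fin n) (Fin m) ℝ) : ℝ :=
  Real.sqrt (∑ i, ∑ j, A i j ^ 2)

/-- Frobenius distance from a matrix to a set of matrices. -/
def frobDistSet {n m : ℕ} (X : Matrix (Fin n) (Fin m) ℝ)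
    (S : Set (Matrix (Fin n) (Fin m) ℝ)) : ℝ :=
  sInf ((fun Z => frobNorm (X - Z)) '' S)

section

variable {ι : Type*} [Fintype ι] [DecidableEq ι]

theorem trace_diagonal_mul_diagonal_mul_transpose (x q : ι → ℝ) (W : Matrix ι ι ℝ) :
    trace (diagonal x * W * diagonal q * Wᵀ) = x ⬝ᵥ ((W ⊙ W) *ᵥ q) := by
  simp only [trace, diag, mul_apply, diagonal, of_apply, transpose_apply, hadamard, mulVec,
    dotProduct, Finset.mul_sum]
  refine Finset.sum_congr rfl fun k _ => Finset.sum_congr rfl fun l _ => ?_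
  simp [Finset.sum_ite_eq', ite_mul]
  ring

theorem trace_conj_diagonal_mul_transpose_conj_diagonal (x q : ι → ℝ) (U V : Matrix ι ι ℝ) :
    trace (U * diagonal x * Uᵀ * (V * diagonal q * Vᵀ)ᵀ) =
      x ⬝ᵥ (((Uᵀ * V) ⊙ (Uᵀ * V)) *ᵥ q) := by
  rw [← trace_diagonal_mul_diagonal_mul_transpose, transpose_mul, transpose_mul,
    transpose_transpose, diagonal_transpose, transpose_mul, transpose_transpose]
  simp only [Matrix.mul_assoc]
  rw [trace_mul_comm U]
  simp only [Matrix.mul_assoc]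

theorem hadamard_self_mem_doublyStochastic {W : Matrix ι ι ℝ} (hW : W * Wᵀ = 1) :
    W ⊙ W ∈ doublyStochastic ℝ ι := by
  have hW' : Wᵀ * W = 1 := mul_eq_one_comm.mp hW
  refine mem_doublyStochastic_iff_sum.mpr ⟨fun i j => mul_self_nonneg _, fun i => ?_, fun j => ?_⟩
  · simpa [mul_apply] using congrFun₂ hW i i
  · simpa [mul_apply] using congrFun₂ hW' j j

theorem dotProduct_mulVec_le_of_mem_doublyStochastic {D : Matrix ι ι ℝ}
    (hD : D ∈ doublyStochastic ℝ ι) {x q : ι → ℝ} {c : ℝ}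
    (h : ∀ σ : Equiv.Perm ι, x ⬝ᵥ (q ∘ σ) ≤ c) : x ⬝ᵥ (D *ᵥ q) ≤ c := by
  rw [← SetLike.mem_coe, doublyStochastic_eq_convexHull_permMatrix] at hD
  refine convexHull_min ?_
    (convex_halfSpace_le (f := fun M : Matrix ι ι ℝ => x ⬝ᵥ (M *ᵥ q)) ?_ c) hD
  · rintro _ ⟨σ, rfl⟩
    simpa [permMatrix_mulVec] using h σ
  · exact ⟨fun A B => by simp [add_mulVec], fun r A => by simp [smul_mulVec]⟩

end

theorem vnorm_nonneg {n : ℕ} (v : Fin n → ℝ) : 0 ≤ vnorm v := Real.sqrt_nonneg _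

theorem vnorm_sq {n : ℕ} (v : Fin n → ℝ) : vnorm v ^ 2 = v ⬝ᵥ v := by
  rw [vnorm, Real.sq_sqrt (by positivity)]
  simp only [dotProduct, sq]

theorem vnorm_sub_sq {n : ℕ} (x y : Fin n → ℝ) :
    vnorm (x - y) ^ 2 = x ⬝ᵥ x + y ⬝ᵥ y - 2 * x ⬝ᵥ y := by
  rw [vnorm_sq, sub_dotProduct, dotProduct_sub, dotProduct_sub, dotProduct_comm y x]
  ring

theorem vnorm_sub_le_of_eq_vdistSet {n : ℕ} {Q : Set (Fin n → ℝ)} {x y z : Fin n → ℝ}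
    (hz : vnorm (x - z) = vdistSet x Q) (hy : y ∈ Q) : vnorm (x - z) ≤ vnorm (x - y) :=
  hz ▸ csInf_le ⟨0, by rintro _ ⟨w, -, rfl⟩; exact vnorm_nonneg _⟩ ⟨y, hy, rfl⟩

theorem frobNorm_nonneg {n m : ℕ} (A : Matrix (Fin n) (Fin m) ℝ) : 0 ≤ frobNorm A :=
  Real.sqrt_nonneg _

theorem frobNorm_sq {n m : ℕ} (A : Matrix (Fin n) (Fin m) ℝ) :
    frobNorm A ^ 2 = trace (A * Aᵀ) := by
  rw [frobNorm, Real.sq_sqrt (by positivity)]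
  simp only [trace, diag, mul_apply, transpose_apply, sq]

theorem frobNorm_conj_diagonal_sub_sq {n : ℕ} {U V : Matrix (Fin n) (Fin n) ℝ}
    (hU : Uᵀ * U = 1) (hV : Vᵀ * V = 1) (x q : Fin n → ℝ) :
    frobNorm (U * diagonal x * Uᵀ - V * diagonal q * Vᵀ) ^ 2 =
      x ⬝ᵥ x + q ⬝ᵥ q - 2 * x ⬝ᵥ (((Uᵀ * V) ⊙ (Uᵀ * V)) *ᵥ q) := by
  have trace_self {W : Matrix (Fin n) (Fin n) ℝ} (hW : Wᵀ * W = 1) (d : Fin n → ℝ) :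
      trace (W * diagonal d * Wᵀ * (W * diagonal d * Wᵀ)ᵀ) = d ⬝ᵥ d := by
    rw [trace_conj_diagonal_mul_transpose_conj_diagonal, hW, hadamard_one]
    simp
  rw [frobNorm_sq, transpose_sub, mul_sub, sub_mul, sub_mul, trace_sub, trace_sub, trace_sub,
    trace_self hU, trace_self hV, ← trace_transpose (V * diagonal q * Vᵀ * _), transpose_mul,
    transpose_transpose, trace_conj_diagonal_mul_transpose_conj_diagonal]
  ring

theorem frobNorm_conj_diagonal_sub_conj_diagonal {n : ℕ} {U : Matrix (Fin n) (Fin n) ℝ}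
    (hU : Uᵀ * U = 1) (x z : Fin n → ℝ) :
    frobNorm (U * diagonal x * Uᵀ - U * diagonal z * Uᵀ) = vnorm (x - z) := by
  rw [← sq_eq_sq₀ (frobNorm_nonneg _) (vnorm_nonneg _), frobNorm_conj_diagonal_sub_sq hU hU,
    vnorm_sub_sq]
  simp [hU, hadamard_one]

theorem vnorm_sub_sq_le_of_mem_doublyStochastic {n : ℕ} {Q : Set (Fin n → ℝ)}
    (hQ : ∀ π : Equiv.Perm (Fin n), ∀ y ∈ Q, y ∘ π ∈ Q) {x z q : Fin n → ℝ}
    (hz : vnorm (x - z) = vdistSet x Q) (hq : q ∈ Q) {D : Matrix (Fin n) (Fin n) ℝ}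
    (hD : D ∈ doublyStochastic ℝ (Fin n)) :
    vnorm (x - z) ^ 2 ≤ x ⬝ᵥ x + q ⬝ᵥ q - 2 * x ⬝ᵥ (D *ᵥ q) := by
  suffices x ⬝ᵥ (D *ᵥ q) ≤ (x ⬝ᵥ x + q ⬝ᵥ q - vnorm (x - z) ^ 2) / 2 by linarith
  refine dotProduct_mulVec_le_of_mem_doublyStochastic hD fun σ => ?_
  have hσ : vnorm (x - z) ^ 2 ≤ vnorm (x - q ∘ σ) ^ 2 :=
    pow_le_pow_left₀ (vnorm_nonneg _) (vnorm_sub_le_of_eq_vdistSet hz (hQ σ q hq)) 2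
  have hqσ : (q ∘ σ) ⬝ᵥ (q ∘ σ) = q ⬝ᵥ q := Equiv.sum_comp σ fun i => q i * q i
  rw [vnorm_sub_sq x (q ∘ σ), hqσ] at hσ
  linarith

theorem projection_onto_spectral_set_symm_general
    (n : ℕ) (Q : Set (Fin n → ℝ))
    (hQ : ∀ π : Equiv.Perm (Fin n), ∀ x ∈ Q, (x ∘ π) ∈ Q)
    (Λ : Set (Matrix (Fin n) (Fin n) ℝ))
    (hΛ : Λ = {A | ∃ V : Matrix (Fin n) (Fin n) ℝ, V * Vᵀ = 1 ∧
      ∃ q ∈ Q, A = V * Matrix.diagonal q * Vᵀ})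
    (U : Matrix (Fin n) (Fin n) ℝ) (hU : U * Uᵀ = 1)
    (x : Fin n → ℝ)
    (X : Matrix (Fin n) (Fin n) ℝ) (hX : X = U * Matrix.diagonal x * Uᵀ)
    (z : Fin n → ℝ) (hz : z ∈ Q) (hzx : vnorm (x - z) = vdistSet x Q) :
    U * Matrix.diagonal z * Uᵀ ∈ Λ ∧
      frobNorm (X - U * Matrix.diagonal z * Uᵀ) = frobDistSet X Λ := by
  have hUU : Uᵀ * U = 1 := mul_eq_one_comm.mp hU
  have hY : U * diagonal z * Uᵀ ∈ Λ := by
    rw [hΛ]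
    exact ⟨U, hU, z, hz, rfl⟩
  suffices IsLeast ((fun Z => frobNorm (X - Z)) '' Λ) (frobNorm (X - U * diagonal z * Uᵀ)) from
    ⟨hY, this.csInf_eq.symm⟩
  refine ⟨⟨_, hY, rfl⟩, ?_⟩
  rintro _ ⟨Z, hZ, rfl⟩
  obtain ⟨V, hV, q, hq, rfl⟩ := hΛ ▸ hZ
  have hW : (Uᵀ * V) * (Uᵀ * V)ᵀ = 1 := by
    rw [transpose_mul, transpose_transpose, Matrix.mul_assoc, ← Matrix.mul_assoc V, hV,
      Matrix.one_mul, hUU]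
  rw [hX, ← sq_le_sq₀ (frobNorm_nonneg _) (frobNorm_nonneg _),
    frobNorm_conj_diagonal_sub_conj_diagonal hUU,
    frobNorm_conj_diagonal_sub_sq hUU (mul_eq_one_comm.mp hV)]
  exact vnorm_sub_sq_le_of_mem_doublyStochastic hQ hzx hq (hadamard_self_mem_doublyStochastic hW)

/-- **Projection onto spectral sets (symmetric case).** -/
theorem projection_onto_spectral_set_symm
    (n : ℕ) (Q : Set (Fin n → ℝ))
    (hQ : ∀ π : Equiv.Perm (Fin n), ∀ x ∈ Q, (x ∘ π) ∈ Q)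
    (Λ : Set (Matrix (Fin n) (Fin n) ℝ))
    (hΛ : Λ = {A | ∃ V : Matrix (Fin n) (Fin n) ℝ, V * Vᵀ = 1 ∧
      ∃ q ∈ Q, A = V * Matrix.diagonal q * Vᵀ})
    (U : Matrix (Fin n) (Fin n) ℝ) (hU : U * Uᵀ = 1)
    (x : Fin n → ℝ) (hx : ∀ i j : Fin n, i ≤ j → x j ≤ x i)
    (X : Matrix (Fin n) (Fin n) ℝ) (hX : X = U * Matrix.diagonal x * Uᵀ)
    (z : Fin n → ℝ) (hz : z ∈ Q) (hzx : vnorm (x - z) = vdistSet x Q) :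
    U * Matrix.diagonal z * Uᵀ ∈ Λ ∧
      frobNorm (X - U * Matrix.diagonal z * Uᵀ) = frobDistSet X Λ :=
  projection_onto_spectral_set_symm_general n Q hQ Λ hΛ U hU x X hX z hz hzx

end
end

section
/- Let Q ⊆ ℝⁿ be absolutely permutation-invariant and let x ∈ ℝⁿ satisfy x₁ ≥ x₂ ≥ … ≥ xₙ ≥ 0. If y ∈ Q satisfies |x − y| = d(x, Q), then there exist a permutation π of {1,…,n} and signs ε ∈ {−1,1}ⁿ such that the vector y' defined by y'ᵢ = εᵢ·y_{π(i)} lies in Q, satisfies y'₁ ≥ y'₂ ≥ … ≥ y'ₙ ≥ 0, and satisfies |x − y'| = d(x, Q). -/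
noncomputable section

/-- `Q ⊆ ℝⁿ` is absolutely permutation-invariant: stable under permutations of coordinates
and coordinate-wise changes of sign. -/
def AbsPermInv {n : ℕ} (Q : Set (Fin n → ℝ)) : Prop :=
  ∀ (π : Equiv.Perm (Fin n)) (e : Fin n → ℝ), (∀ i, e i = 1 ∨ e i = -1) →
    ∀ x ∈ Q, (fun i => e i * x (π i)) ∈ Q

/-!
Reorder the coordinates of `y` by decreasing absolute value and make them all nonnegative; since
`Q` is absolutely permutation-invariant the result `y'` stays in `Q` and has the same norm as
`y`. Hence `|x - y'|² ≤ |x - y|²` amounts to `⟪x, y⟫ ≤ ⟪x, y'⟫`, which holds because `x ≥ 0`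
gives `⟪x, y⟫ ≤ ⟪x, |y|⟫` and the rearrangement inequality for the two decreasing vectors `x`,
`y'` gives `⟪x, |y|⟫ ≤ ⟪x, y'⟫`. So `y'` is also a nearest point.
-/

theorem Tuple.exists_perm_antitone_comp {α : Type*} [LinearOrder α] {n : ℕ} (f : Fin n → α) :
    ∃ π : Equiv.Perm (Fin n), Antitone (f ∘ π) :=
  ⟨Fin.revPerm.trans (Tuple.sort f), fun _ _ hij => Tuple.monotone_sort f (Fin.rev_le_rev.mpr hij)⟩

theorem exists_sign_mul_eq_abs (a : ℝ) : ∃ s : ℝ, (s = 1 ∨ s = -1) ∧ |a| = s * a := by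
  rcases le_or_gt 0 a with ha | ha
  · exact ⟨1, .inl rfl, by rw [abs_of_nonneg ha, one_mul]⟩
  · exact ⟨-1, .inr rfl, by rw [abs_of_neg ha, neg_one_mul]⟩

section Vectors

variable {n : ℕ}

theorem vdistSet_le_vnorm_sub {x z : Fin n → ℝ} {Q : Set (Fin n → ℝ)} (hz : z ∈ Q) :
    vdistSet x Q ≤ vnorm (x - z) :=
  csInf_le ⟨0, by rintro _ ⟨w, -, rfl⟩; exact Real.sqrt_nonneg _⟩ ⟨z, hz, rfl⟩

theorem vnorm_sub_le_vnorm_sub {x z z' : Fin n → ℝ} (hsq : ∑ i, z' i ^ 2 = ∑ i, z i ^ 2)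
    (hinner : ∑ i, x i * z i ≤ ∑ i, x i * z' i) : vnorm (x - z') ≤ vnorm (x - z) := by
  have expand : ∀ w : Fin n → ℝ,
      ∑ i, (x - w) i ^ 2 = ∑ i, x i ^ 2 + ∑ i, w i ^ 2 - 2 * ∑ i, x i * w i := fun w => by
    simp only [Pi.sub_apply, sub_sq, Finset.sum_add_distrib, Finset.sum_sub_distrib,
      Finset.mul_sum, mul_assoc]
    ring
  refine Real.sqrt_le_sqrt ?_
  rw [expand, expand, hsq]
  linarith

theorem sum_sq_abs_comp_perm (y : Fin n → ℝ) (π : Equiv.Perm (Fin n)) :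
    ∑ i, |y (π i)| ^ 2 = ∑ i, y i ^ 2 := by
  simp only [sq_abs]
  exact Equiv.sum_comp π fun i => y i ^ 2

theorem sum_mul_le_sum_mul_abs_comp_perm {x y : Fin n → ℝ} (hx : Antitone x) (hx0 : 0 ≤ x)
    {π : Equiv.Perm (Fin n)} (hπ : Antitone fun i => |y (π i)|) :
    ∑ i, x i * y i ≤ ∑ i, x i * |y (π i)| :=
  calc ∑ i, x i * y i
      ≤ ∑ i, x i * |y i| :=
        Finset.sum_le_sum fun i _ => mul_le_mul_of_nonneg_left (le_abs_self _) (hx0 i)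
    _ = ∑ i, x i * |y (π (π.symm i))| := by simp only [Equiv.apply_symm_apply]
    _ ≤ ∑ i, x i * |y (π i)| := (hx.monovary hπ).sum_mul_comp_perm_le_sum_mul

end Vectors

/-- **Permutations of projected points.** -/
theorem permutations_of_projected_points
    (n : ℕ) (Q : Set (Fin n → ℝ)) (hQ : AbsPermInv Q)
    (x : Fin n → ℝ) (hx : ∀ i j : Fin n, i ≤ j → x j ≤ x i) (hx0 : ∀ i, 0 ≤ x i)
    (y : Fin n → ℝ) (hy : y ∈ Q) (hyx : vnorm (x - y) = vdistSet x Q) :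
    ∃ (π : Equiv.Perm (Fin n)) (e : Fin n → ℝ) (y' : Fin n → ℝ),
      (∀ i, e i = 1 ∨ e i = -1) ∧
      (∀ i, y' i = e i * y (π i)) ∧
      y' ∈ Q ∧
      (∀ i j : Fin n, i ≤ j → y' j ≤ y' i) ∧ (∀ i, 0 ≤ y' i) ∧
      vnorm (x - y') = vdistSet x Q := by
  obtain ⟨π, hπ⟩ := Tuple.exists_perm_antitone_comp fun i => |y i|
  choose e he hey using fun i => exists_sign_mul_eq_abs (y (π i))
  have hmem : (fun i => |y (π i)|) ∈ Q := by
    simpa only [hey] using hQ π e he y hy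
  have hle : vnorm (x - fun i => |y (π i)|) ≤ vnorm (x - y) :=
    vnorm_sub_le_vnorm_sub (sum_sq_abs_comp_perm y π)
      (sum_mul_le_sum_mul_abs_comp_perm hx hx0 hπ)
  exact ⟨π, e, fun i => |y (π i)|, he, hey, hmem, hπ, fun i => abs_nonneg _,
    le_antisymm (hyx ▸ hle) (vdistSet_le_vnorm_sub hmem)⟩

end
end

section
/- Let n ≤ m and let L, M ⊆ ℝⁿ be absolutely permutation-invariant sets with L ⊆ cl M. Then Σ(L) ⊆ cl Σ(M), where for S ⊆ ℝⁿ the lift Σ(S) := {U·(Diag s)·Vᵀ : U an n×n orthogonal matrix, V an m×m orthogonal matrix, s ∈ S} is a set of real n×m matrices, Diag s denotes the n×m matrix whose (i,i) entries are sᵢ and all other entries are zero, and closures are taken with respect to the Frobenius norm (respectively the Euclidean norm on ℝⁿ). -/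
open Matrix

noncomputable section

/-- The `n × m` matrix with `(i,i)` entries `s i` and all other entries zero. -/
def rdiag (n m : ℕ) (s : Fin n → ℝ) : Matrix (Fin n) (Fin m) ℝ :=
  Matrix.of fun i j => if (j : ℕ) = (i : ℕ) then s i else 0

/-- The spectral lift of a set `S ⊆ ℝⁿ` to the `n × m` real matrices. -/
def lift (n m : ℕ) (S : Set (Fin n → ℝ)) : Set (Matrix (Fin n) (Fin m) ℝ) :=
  {A | ∃ (U : Matrix (Fin n) (Fin n) ℝ) (V : Matrix (Fin m) (Fin m) ℝ),
    U * Uᵀ = 1 ∧ V * Vᵀ = 1 ∧ ∃ s ∈ S, A = U * rdiag n m s * Vᵀ}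

/-! For fixed orthogonal `U`, `V` the map `s ↦ U * rdiag s * Vᵀ` is an isometry from `(ℝⁿ, vnorm)`
into `(ℝⁿˣᵐ, frobNorm)`, so an approximation `y ∈ M` of `s ∈ L` lifts to the
approximation `U * rdiag y * Vᵀ ∈ lift M` of `U * rdiag s * Vᵀ`, with the same `U` and `V`. -/

lemma sum_sq_eq_trace_mul_transpose {ι κ : Type*} [Fintype ι] [Fintype κ] (A : Matrix ι κ ℝ) :
    ∑ i, ∑ j, A i j ^ 2 = (A * Aᵀ).trace := by
  simp [Matrix.trace, Matrix.mul_apply, sq]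

lemma frobNorm_mul_mul_transpose {n m : ℕ} {U : Matrix (Fin n) (Fin n) ℝ}
    {V : Matrix (Fin m) (Fin m) ℝ} (hU : U * Uᵀ = 1) (hV : V * Vᵀ = 1)
    (A : Matrix (Fin n) (Fin m) ℝ) :
    frobNorm (U * A * Vᵀ) = frobNorm A := by
  have hVV : Vᵀ * V = 1 := mul_eq_one_comm.mp hV
  have hUU : Uᵀ * U = 1 := mul_eq_one_comm.mp hU
  have hgram : (U * A * Vᵀ) * (U * A * Vᵀ)ᵀ = U * (A * Aᵀ) * Uᵀ := by
    simp only [Matrix.transpose_mul, Matrix.transpose_transpose, Matrix.mul_assoc]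
    rw [← Matrix.mul_assoc Vᵀ V, hVV, Matrix.one_mul]
  unfold frobNorm
  rw [sum_sq_eq_trace_mul_transpose, sum_sq_eq_trace_mul_transpose, hgram,
    Matrix.trace_mul_comm, ← Matrix.mul_assoc, hUU, Matrix.one_mul]

lemma frobNorm_rdiag {n m : ℕ} (hnm : n ≤ m) (v : Fin n → ℝ) :
    frobNorm (rdiag n m v) = vnorm v := by
  unfold frobNorm vnorm rdiag
  congr 1
  refine Finset.sum_congr rfl fun i _ => ?_
  have hdiag : ∀ j : Fin m, (j : ℕ) = (i : ℕ) ↔ j = Fin.castLE hnm i := fun j => by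
    rw [Fin.ext_iff, Fin.val_castLE]
  simp only [Matrix.of_apply, hdiag, apply_ite (· ^ 2)]
  simp

lemma rdiag_sub {n m : ℕ} (s y : Fin n → ℝ) :
    rdiag n m s - rdiag n m y = rdiag n m (s - y) := by
  ext i j
  simp only [rdiag, Matrix.sub_apply, Matrix.of_apply, Pi.sub_apply]
  split_ifs <;> simp

lemma frobNorm_svd_sub_svd {n m : ℕ} (hnm : n ≤ m) {U : Matrix (Fin n) (Fin n) ℝ}
    {V : Matrix (Fin m) (Fin m) ℝ} (hU : U * Uᵀ = 1) (hV : V * Vᵀ = 1) (s y : Fin n → ℝ) :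
    frobNorm (U * rdiag n m s * Vᵀ - U * rdiag n m y * Vᵀ) = vnorm (s - y) := by
  rw [← Matrix.sub_mul, ← Matrix.mul_sub, rdiag_sub, frobNorm_mul_mul_transpose hU hV,
    frobNorm_rdiag hnm]

theorem lift_subset_closure_lift_general
    (n m : ℕ) (hnm : n ≤ m) (L M : Set (Fin n → ℝ))
    (hcl : ∀ x ∈ L, ∀ ε > (0 : ℝ), ∃ y ∈ M, vnorm (x - y) < ε) :
    ∀ Z ∈ lift n m L, ∀ ε > (0 : ℝ), ∃ W ∈ lift n m M, frobNorm (Z - W) < ε := by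
  rintro Z ⟨U, V, hU, hV, s, hsL, rfl⟩ ε hε
  obtain ⟨y, hyM, hy⟩ := hcl s hsL ε hε
  refine ⟨U * rdiag n m y * Vᵀ, ⟨U, V, hU, hV, y, hyM, rfl⟩, ?_⟩
  rwa [frobNorm_svd_sub_svd hnm hU hV]

/-- **Lifts preserve the frontier inclusion.** Here closure in `ℝⁿ` is with respect to the
Euclidean norm and closure in matrix space is with respect to the Frobenius norm,
expressed via the corresponding `ε`-characterizations. -/
theorem lift_subset_closure_lift
    (n m : ℕ) (hnm : n ≤ m) (L M : Set (Fin n → ℝ))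
    (hL : AbsPermInv L) (hM : AbsPermInv M)
    (hcl : ∀ x ∈ L, ∀ ε > (0 : ℝ), ∃ y ∈ M, vnorm (x - y) < ε) :
    ∀ Z ∈ lift n m L, ∀ ε > (0 : ℝ), ∃ W ∈ lift n m M, frobNorm (Z - W) < ε :=
  lift_subset_closure_lift_general n m hnm L M hcl

end
end

section
/- Let M₂ := {(x, y, x·y) ∈ ℝ³ : x > 0} and let p = (a, 0, c) with a > 0 and c ≠ 0. Then every point q in the closure of M₂ satisfying |p − q| = d(p, cl M₂) has nonzero second coordinate. (This computation underlies the fact that the Whitney stratification {M₁, M₂} of the set {(x,y,z) : z = xy, x ≥ 0}, with M₁ = {0}×ℝ×{0}, is not normally flat.) -/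
/-!
Points of the closure lie on the saddle `z = xy`, so a nearest point `q` with `q 1 = 0` lies on
the `x`-axis and is at distance at least `|c|` from `p = (a, 0, c)`. But moving along the ruling
`x = a` of the saddle to `(a, t, at)` with `t = ac / (1 + a²)` brings the squared distance down to
`c² - a²c² / (1 + a²) < c²`.
-/

lemma isClosed_setOf_coord_two_eq_mul :
    IsClosed {q : EuclideanSpace ℝ (Fin 3) | q 2 = q 0 * q 1} :=
  isClosed_eq (by fun_prop) (by fun_prop)

lemma EuclideanSpace.dist_sq_eq_fin_three (x y : EuclideanSpace ℝ (Fin 3)) :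
    dist x y ^ 2 = (x 0 - y 0) ^ 2 + (x 1 - y 1) ^ 2 + (x 2 - y 2) ^ 2 := by
  simp [EuclideanSpace.dist_sq_eq, Fin.sum_univ_three, Real.dist_eq, sq_abs]

lemma exists_sq_add_sub_mul_sq_lt_sq {a c : ℝ} (ha : a ≠ 0) (hc : c ≠ 0) :
    ∃ t : ℝ, t ^ 2 + (c - a * t) ^ 2 < c ^ 2 := by
  have hpos : 0 < 1 + a ^ 2 := by positivity
  refine ⟨a * c / (1 + a ^ 2), ?_⟩
  have hval : (a * c / (1 + a ^ 2)) ^ 2 + (c - a * (a * c / (1 + a ^ 2))) ^ 2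
      = c ^ 2 - (a * c) ^ 2 / (1 + a ^ 2) := by
    field_simp
    ring
  rw [hval, sub_lt_self_iff]
  exact div_pos (sq_pos_of_ne_zero (mul_ne_zero ha hc)) hpos

/-- **The nearest point on the closed surface `{z = xy, x ≥ 0}` to `(a,0,c)` with `a > 0`,
`c ≠ 0` has nonzero second coordinate** (so the Whitney stratification of this set by
`M₁ = {0}×ℝ×{0}` and `M₂ = {(x,y,xy) : x > 0}` is not normally flat). -/
theorem nearest_point_has_nonzero_second_coordinate
    (M₂ : Set (EuclideanSpace ℝ (Fin 3)))
    (hM₂ : M₂ = {q : EuclideanSpace ℝ (Fin 3) | 0 < q 0 ∧ q 2 = q 0 * q 1})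
    (p : EuclideanSpace ℝ (Fin 3))
    (hp0 : 0 < p 0) (hp1 : p 1 = 0) (hp2 : p 2 ≠ 0) :
    ∀ q ∈ closure M₂, dist p q = Metric.infDist p (closure M₂) → q 1 ≠ 0 := by
  intro q hq hnearest hq1
  have hq2 : q 2 = 0 := by
    have hq_saddle : q 2 = q 0 * q 1 :=
      closure_minimal (hM₂ ▸ fun _ hx => hx.2) isClosed_setOf_coord_two_eq_mul hq
    rw [hq_saddle, hq1, mul_zero]
  obtain ⟨t, ht⟩ := exists_sq_add_sub_mul_sq_lt_sq hp0.ne' hp2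
  let r : EuclideanSpace ℝ (Fin 3) := !₂[p 0, t, p 0 * t]
  have hr : r ∈ M₂ := by
    rw [hM₂]
    exact ⟨hp0, rfl⟩
  have hdist_r : dist p r ^ 2 = t ^ 2 + (p 2 - p 0 * t) ^ 2 := by
    simp [EuclideanSpace.dist_sq_eq_fin_three, r, hp1]
  have hdist_q : p 2 ^ 2 ≤ dist p q ^ 2 := by
    rw [EuclideanSpace.dist_sq_eq_fin_three, hp1, hq1, hq2]
    linarith [sq_nonneg (p 0 - q 0)]
  have hcloser : dist p r < dist p q := by
    rw [← sq_lt_sq₀ dist_nonneg dist_nonneg]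
    linarith
  have hle : Metric.infDist p (closure M₂) ≤ dist p r :=
    Metric.infDist_le_dist_of_mem (subset_closure hr)
  linarith
end
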